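/- arXiv:2605.22741 — 2 statements merged into one kernel-verified Lean document; each statement's English description precedes it below -/
import Mathlib

section
/- There exists an absolute constant C > 0 with the following property: for all continuously differentiable functions f, g : ℝ² → ℝ such that f, ∂₁f, g, ∂₂g all belong to L²(ℝ²), one has (∫_{ℝ²} |f(x) g(x)|² dx)^{1/2} ≤ C · ‖f‖_{L²}^{1/2} · ‖∂₁f‖_{L²}^{1/2} · ‖g‖_{L²}^{1/2} · ‖∂₂g‖_{L²}^{1/2}. -/
/-!
If `h : ℝ → ℝ` is differentiable and `h² ∈ L¹`, then `h²` takes arbitrarily small values, and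
`(h²)' = 2 h h'`, so `h(x)² ≤ 2 ∫ |h h'|` for every `x`. Applied to the horizontal slices of `f`
and the vertical slices of `g`, this bounds `f(a,b)²` by a function of `b` alone and `g(a,b)²` by a
function of `a` alone. By Tonelli the product of the two bounds integrates to
`4 ‖f ∂₁f‖_{L¹} ‖g ∂₂g‖_{L¹}`, and Cauchy–Schwarz bounds each factor by a product of `L²` norms.
-/

open MeasureTheory Set
open scoped ENNReal

noncomputable section

/-- Partial derivative in the first coordinate of `ℝ²`. -/
def d1 (f : ℝ × ℝ → ℝ) : ℝ × ℝ → ℝ := fun x => deriv (fun s => f (s, x.2)) x.1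

/-- Partial derivative in the second coordinate of `ℝ²`. -/
def d2 (f : ℝ × ℝ → ℝ) : ℝ × ℝ → ℝ := fun x => deriv (fun s => f (x.1, s)) x.2

/-- The `L²(ℝ²)` norm, valued in `ℝ≥0∞`. -/
def L2e (f : ℝ × ℝ → ℝ) : ℝ≥0∞ := eLpNorm f 2 volume

theorem exists_norm_lt_of_integrable {α E : Type*} [MeasurableSpace α] [NormedAddCommGroup E]
    {μ : Measure α} {u : α → E} (hu : Integrable u μ) (hμ : μ univ = ∞) {ε : ℝ} (hε : 0 < ε) :
    ∃ x, ‖u x‖ < ε := by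
  by_contra! h
  have hlarge : {x | ε ≤ ‖u x‖} = univ := eq_univ_of_forall h
  exact (hu.measure_norm_ge_lt_top hε).ne (hlarge ▸ hμ)

theorem sq_le_two_mul_integral_norm_mul_deriv {h : ℝ → ℝ} (hd : Differentiable ℝ h)
    (hsq : Integrable fun t => h t ^ 2) (hint : Integrable fun t => h t * deriv h t) (x : ℝ) :
    h x ^ 2 ≤ 2 * ∫ t, ‖h t * deriv h t‖ := by
  refine le_of_forall_pos_le_add fun ε hε => ?_
  obtain ⟨y, hy⟩ := exists_norm_lt_of_integrable hsq (by simp) hε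
  rw [Real.norm_of_nonneg (sq_nonneg _)] at hy
  have hftc : ∫ t in y..x, 2 * (h t * deriv h t) = h x ^ 2 - h y ^ 2 :=
    intervalIntegral.integral_eq_sub_of_hasDerivAt
      (fun t _ => by simpa [mul_assoc] using (hd t).hasDerivAt.pow 2)
      (hint.const_mul 2).intervalIntegrable
  have hbound : ∫ t in y..x, 2 * (h t * deriv h t) ≤ 2 * ∫ t, ‖h t * deriv h t‖ :=
    calc ∫ t in y..x, 2 * (h t * deriv h t)
        ≤ ∫ t in uIoc y x, ‖2 * (h t * deriv h t)‖ :=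
          (Real.le_norm_self _).trans intervalIntegral.norm_integral_le_integral_norm_uIoc
      _ ≤ ∫ t, ‖2 * (h t * deriv h t)‖ :=
          setIntegral_le_integral (hint.const_mul 2).norm (ae_of_all _ fun _ => norm_nonneg _)
      _ = 2 * ∫ t, ‖h t * deriv h t‖ := by
          simp only [norm_mul, Real.norm_ofNat, integral_const_mul]
  linarith

theorem enorm_sq_le_two_mul_lintegral_enorm_mul_deriv {h : ℝ → ℝ} (hd : Differentiable ℝ h)
    (hsq : Integrable fun t => h t ^ 2) (x : ℝ) :
    ‖h x‖ₑ ^ 2 ≤ 2 * ∫⁻ t, ‖h t * deriv h t‖ₑ := by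
  by_cases hfin : ∫⁻ t, ‖h t * deriv h t‖ₑ = ∞
  · rw [hfin, ENNReal.mul_top two_ne_zero]
    exact le_top
  have hint : Integrable fun t => h t * deriv h t :=
    ⟨hd.continuous.aestronglyMeasurable.mul (measurable_deriv h).aestronglyMeasurable,
      lt_top_iff_ne_top.2 hfin⟩
  rw [← ofReal_integral_norm_eq_lintegral_enorm hint, ← ofReal_norm,
    ← ENNReal.ofReal_pow (norm_nonneg _), ← ENNReal.ofReal_ofNat 2,
    ← ENNReal.ofReal_mul zero_le_two, Real.norm_eq_abs, sq_abs]
  exact ENNReal.ofReal_le_ofReal (sq_le_two_mul_integral_norm_mul_deriv hd hsq hint x)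

theorem ae_forall_enorm_sq_le_lintegral_d1 {f : ℝ × ℝ → ℝ} (hf : Differentiable ℝ f)
    (hf2 : MemLp f 2 volume) :
    ∀ᵐ b : ℝ, ∀ a, ‖f (a, b)‖ₑ ^ 2 ≤ 2 * ∫⁻ s, ‖f (s, b) * d1 f (s, b)‖ₑ := by
  have hsq := hf2.integrable_sq
  rw [Measure.volume_eq_prod] at hsq
  filter_upwards [hsq.prod_left_ae] with b hb a
  exact enorm_sq_le_two_mul_lintegral_enorm_mul_deriv
    (hf.comp (differentiable_id.prodMk (differentiable_const b))) hb a

theorem ae_forall_enorm_sq_le_lintegral_d2 {g : ℝ × ℝ → ℝ} (hg : Differentiable ℝ g)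
    (hg2 : MemLp g 2 volume) :
    ∀ᵐ a : ℝ, ∀ b, ‖g (a, b)‖ₑ ^ 2 ≤ 2 * ∫⁻ t, ‖g (a, t) * d2 g (a, t)‖ₑ := by
  have hsq := hg2.integrable_sq
  rw [Measure.volume_eq_prod] at hsq
  filter_upwards [hsq.prod_right_ae] with a ha b
  exact enorm_sq_le_two_mul_lintegral_enorm_mul_deriv
    (hg.comp ((differentiable_const a).prodMk differentiable_id)) ha b

theorem lintegral_enorm_mul_sq_le {f g : ℝ × ℝ → ℝ} (hf : Differentiable ℝ f)
    (hg : Differentiable ℝ g) (hf2 : MemLp f 2 volume) (hg2 : MemLp g 2 volume)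
    (hd1 : AEStronglyMeasurable (d1 f) volume) (hd2 : AEStronglyMeasurable (d2 g) volume) :
    ∫⁻ z, ‖f z * g z‖ₑ ^ 2 ≤ 4 * (∫⁻ z, ‖f z * d1 f z‖ₑ) * ∫⁻ z, ‖g z * d2 g z‖ₑ := by
  have hfd1 : AEMeasurable (fun z => ‖f z * d1 f z‖ₑ) (volume.prod volume) :=
    (hf2.1.mul hd1).enorm
  have hgd2 : AEMeasurable (fun z => ‖g z * d2 g z‖ₑ) (volume.prod volume) :=
    (hg2.1.mul hd2).enorm
  set F := fun b : ℝ => ∫⁻ s, ‖f (s, b) * d1 f (s, b)‖ₑ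
  set G := fun a : ℝ => ∫⁻ t, ‖g (a, t) * d2 g (a, t)‖ₑ
  have hF := ae_forall_enorm_sq_le_lintegral_d1 hf hf2
  have hG := ae_forall_enorm_sq_le_lintegral_d2 hg hg2
  rw [Measure.volume_eq_prod]
  calc ∫⁻ z, ‖f z * g z‖ₑ ^ 2 ∂volume.prod volume
      ≤ ∫⁻ z, 2 * G z.1 * (2 * F z.2) ∂volume.prod volume := by
        refine lintegral_mono_ae ?_
        filter_upwards [Measure.quasiMeasurePreserving_fst.ae hG,
          Measure.quasiMeasurePreserving_snd.ae hF] with z hGz hFz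
        rw [enorm_mul, mul_pow, mul_comm]
        exact mul_le_mul' (hGz z.2) (hFz z.1)
    _ = (∫⁻ a, 2 * G a) * ∫⁻ b, 2 * F b :=
        lintegral_prod_mul (hgd2.lintegral_prod_right'.const_mul 2)
          (hfd1.lintegral_prod_left'.const_mul 2)
    _ = 4 * (∫⁻ z, ‖f z * d1 f z‖ₑ ∂volume.prod volume)
          * ∫⁻ z, ‖g z * d2 g z‖ₑ ∂volume.prod volume := by
        rw [lintegral_const_mul' _ _ ENNReal.ofNat_ne_top,
          lintegral_const_mul' _ _ ENNReal.ofNat_ne_top, lintegral_prod _ hgd2,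
          lintegral_prod_symm _ hfd1]
        ring

theorem lintegral_enorm_mul_le_L2e_mul_L2e {u v : ℝ × ℝ → ℝ} (hu : AEStronglyMeasurable u volume)
    (hv : AEStronglyMeasurable v volume) : ∫⁻ z, ‖u z * v z‖ₑ ≤ L2e u * L2e v := by
  have := eLpNorm_smul_le_mul_eLpNorm (p := 2) (q := 2) (r := 1) hv hu
  rwa [eLpNorm_one_eq_lintegral_enorm] at this

theorem L2e_sq_eq_lintegral (u : ℝ × ℝ → ℝ) : L2e u ^ 2 = ∫⁻ z, ‖u z‖ₑ ^ 2 := by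
  simpa [L2e] using eLpNorm_nnreal_pow_eq_lintegral (f := u) (μ := volume) (p := 2) two_ne_zero

theorem ENNReal.le_two_mul_rpow_half_of_sq_le {x a b c d : ℝ≥0∞}
    (h : x ^ 2 ≤ 4 * (a * b) * (c * d)) :
    x ≤ 2 * a ^ (1 / 2 : ℝ) * b ^ (1 / 2 : ℝ) * c ^ (1 / 2 : ℝ) * d ^ (1 / 2 : ℝ) := by
  have hsq : ∀ y : ℝ≥0∞, (y ^ (1 / 2 : ℝ)) ^ 2 = y := fun y => by
    rw [← ENNReal.rpow_natCast, ← ENNReal.rpow_mul]; norm_num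
  rw [← ENNReal.pow_le_pow_left_iff two_ne_zero]
  simpa only [mul_pow, hsq, ← mul_assoc, show (2 : ℝ≥0∞) ^ 2 = 4 by norm_num] using h

/-- **Proposition 2.1, first anisotropic inequality.**
`(∫ |f g|²)^{1/2} ≲ ‖f‖_{L²}^{1/2} ‖∂₁f‖_{L²}^{1/2} ‖g‖_{L²}^{1/2} ‖∂₂g‖_{L²}^{1/2}`. -/
theorem anisotropic_product_estimate :
    ∃ C : ℝ, 0 < C ∧
      ∀ f g : ℝ × ℝ → ℝ,
        ContDiff ℝ 1 f → ContDiff ℝ 1 g →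
        MemLp f 2 volume → MemLp (d1 f) 2 volume →
        MemLp g 2 volume → MemLp (d2 g) 2 volume →
        L2e (fun x => f x * g x) ≤
          ENNReal.ofReal C
            * L2e f ^ ((1 : ℝ) / 2) * L2e (d1 f) ^ ((1 : ℝ) / 2)
            * L2e g ^ ((1 : ℝ) / 2) * L2e (d2 g) ^ ((1 : ℝ) / 2) := by
  refine ⟨2, two_pos, fun f g hf hg hf2 hd1 hg2 hd2 => ?_⟩
  rw [ENNReal.ofReal_ofNat]
  refine ENNReal.le_two_mul_rpow_half_of_sq_le ?_
  calc L2e (fun x => f x * g x) ^ 2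
      = ∫⁻ z, ‖f z * g z‖ₑ ^ 2 := L2e_sq_eq_lintegral _
    _ ≤ 4 * (∫⁻ z, ‖f z * d1 f z‖ₑ) * ∫⁻ z, ‖g z * d2 g z‖ₑ :=
      lintegral_enorm_mul_sq_le (hf.differentiable one_ne_zero) (hg.differentiable one_ne_zero)
        hf2 hg2 hd1.1 hd2.1
    _ ≤ 4 * (L2e f * L2e (d1 f)) * (L2e g * L2e (d2 g)) := by
      gcongr
      · exact lintegral_enorm_mul_le_L2e_mul_L2e hf2.1 hd1.1
      · exact lintegral_enorm_mul_le_L2e_mul_L2e hg2.1 hd2.1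

end
end

section
/- Let f : ℝ → ℝ be a smooth (C^∞) function. Then there exists a constant C > 0, depending only on f, such that for every smooth function v : ℝ² → ℝ with finite H²(ℝ²) norm satisfying ‖v‖_{H²} < 1, one has ‖∇(f∘v)‖_{L²(ℝ²)} ≤ C ‖∇v‖_{L²(ℝ²)} and ‖∇²(f∘v)‖_{L²(ℝ²)} ≤ C ‖∇²v‖_{L²(ℝ²)}, where ∇ and ∇² denote the first and second order total derivatives. -/
open MeasureTheory Set Filter
open scoped ENNReal NNReal Topology

noncomputable section

lemma ofReal_norm_eq_coe_nnnorm {E : Type*} [SeminormedAddCommGroup E] (a : E) :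
    ENNReal.ofReal ‖a‖ = ((‖a‖₊ : ℝ≥0) : ℝ≥0∞) := by
  rw [← ENNReal.ofReal_coe_nnreal, coe_nnnorm]

lemma Measurable.ennnorm {α : Type*} [MeasurableSpace α] {f : α → ℝ} (hf : Measurable f) :
    Measurable (fun x => (‖f x‖₊ : ℝ≥0∞)) := hf.nnnorm.coe_nnreal_ennreal

lemma AEMeasurable.ennnorm {α : Type*} [MeasurableSpace α] {μ : Measure α} {f : α → ℝ}
    (hf : AEMeasurable f μ) : AEMeasurable (fun x => (‖f x‖₊ : ℝ≥0∞)) μ :=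
  hf.nnnorm.coe_nnreal_ennreal

lemma ofReal_integral_norm_eq_lintegral_nnnorm {α : Type*} [MeasurableSpace α] {μ : Measure α}
    {f : α → ℝ} (hf : Integrable f μ) :
    ENNReal.ofReal (∫ x, ‖f x‖ ∂μ) = ∫⁻ x, (‖f x‖₊ : ℝ≥0∞) ∂μ := by
  simpa [enorm_eq_nnnorm] using ofReal_integral_norm_eq_lintegral_enorm hf

lemma hasDerivAt_line1 {w : ℝ × ℝ → ℝ} (hw : Differentiable ℝ w) (a b : ℝ) :
    HasDerivAt (fun s => w (s, b)) (fderiv ℝ w (a, b) (1, 0)) a := by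
  have h1 : HasDerivAt (fun s : ℝ => (s, b)) ((1 : ℝ), (0 : ℝ)) a := by
    simpa using (hasDerivAt_id a).prodMk (hasDerivAt_const a b)
  exact ((hw (a, b)).hasFDerivAt.comp_hasDerivAt a h1)

lemma hasDerivAt_line2 {w : ℝ × ℝ → ℝ} (hw : Differentiable ℝ w) (a b : ℝ) :
    HasDerivAt (fun s => w (a, s)) (fderiv ℝ w (a, b) (0, 1)) b := by
  have h1 : HasDerivAt (fun s : ℝ => (a, s)) ((0 : ℝ), (1 : ℝ)) b := by
    simpa using (hasDerivAt_const b a).prodMk (hasDerivAt_id b)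
  exact ((hw (a, b)).hasFDerivAt.comp_hasDerivAt b h1)

lemma d1_eq {w : ℝ × ℝ → ℝ} (hw : Differentiable ℝ w) (a b : ℝ) :
    d1 w (a, b) = fderiv ℝ w (a, b) (1, 0) := (hasDerivAt_line1 hw a b).deriv

lemma d2_eq {w : ℝ × ℝ → ℝ} (hw : Differentiable ℝ w) (a b : ℝ) :
    d2 w (a, b) = fderiv ℝ w (a, b) (0, 1) := (hasDerivAt_line2 hw a b).deriv

lemma hasDerivAt_d1 {w : ℝ × ℝ → ℝ} (hw : Differentiable ℝ w) (a b : ℝ) :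
    HasDerivAt (fun s => w (s, b)) (d1 w (a, b)) a := by
  rw [d1_eq hw]; exact hasDerivAt_line1 hw a b

lemma hasDerivAt_d2 {w : ℝ × ℝ → ℝ} (hw : Differentiable ℝ w) (a b : ℝ) :
    HasDerivAt (fun s => w (a, s)) (d2 w (a, b)) b := by
  rw [d2_eq hw]; exact hasDerivAt_line2 hw a b

lemma contDiff_d1 {w : ℝ × ℝ → ℝ} (hw : ContDiff ℝ (⊤ : ℕ∞) w) :
    ContDiff ℝ (⊤ : ℕ∞) (d1 w) := by
  have : d1 w = fun x => fderiv ℝ w x (1, 0) := by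
    funext x
    have := d1_eq (hw.differentiable (by simp)) x.1 x.2
    simpa using this
  rw [this]
  exact (hw.fderiv_right (by norm_cast)).clm_apply contDiff_const

lemma contDiff_d2 {w : ℝ × ℝ → ℝ} (hw : ContDiff ℝ (⊤ : ℕ∞) w) :
    ContDiff ℝ (⊤ : ℕ∞) (d2 w) := by
  have : d2 w = fun x => fderiv ℝ w x (0, 1) := by
    funext x
    have := d2_eq (hw.differentiable (by simp)) x.1 x.2
    simpa using this
  rw [this]
  exact (hw.fderiv_right (by norm_cast)).clm_apply contDiff_const

lemma d1_comp {f : ℝ → ℝ} {v : ℝ × ℝ → ℝ} (hf : Differentiable ℝ f)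
    (hv : Differentiable ℝ v) :
    d1 (fun x => f (v x)) = fun x => deriv f (v x) * d1 v x := by
  funext x
  exact (((hf (v x)).hasDerivAt.comp x.1 (hasDerivAt_d1 hv x.1 x.2))).deriv

lemma d2_comp {f : ℝ → ℝ} {v : ℝ × ℝ → ℝ} (hf : Differentiable ℝ f)
    (hv : Differentiable ℝ v) :
    d2 (fun x => f (v x)) = fun x => deriv f (v x) * d2 v x := by
  funext x
  exact (((hf (v x)).hasDerivAt.comp x.2 (hasDerivAt_d2 hv x.1 x.2))).deriv

lemma d1_mul {g h : ℝ × ℝ → ℝ} (hg : Differentiable ℝ g) (hh : Differentiable ℝ h) :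
    d1 (fun x => g x * h x) = fun x => d1 g x * h x + g x * d1 h x := by
  funext x
  exact ((hasDerivAt_d1 hg x.1 x.2).mul (hasDerivAt_d1 hh x.1 x.2)).deriv

lemma d2_mul {g h : ℝ × ℝ → ℝ} (hg : Differentiable ℝ g) (hh : Differentiable ℝ h) :
    d2 (fun x => g x * h x) = fun x => d2 g x * h x + g x * d2 h x := by
  funext x
  exact ((hasDerivAt_d2 hg x.1 x.2).mul (hasDerivAt_d2 hh x.1 x.2)).deriv

lemma d1_eq' {w : ℝ × ℝ → ℝ} (hw : Differentiable ℝ w) :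
    d1 w = fun x => fderiv ℝ w x (1, 0) := by
  funext x; simpa using d1_eq hw x.1 x.2

lemma d2_eq' {w : ℝ × ℝ → ℝ} (hw : Differentiable ℝ w) :
    d2 w = fun x => fderiv ℝ w x (0, 1) := by
  funext x; simpa using d2_eq hw x.1 x.2

lemma schwarz {w : ℝ × ℝ → ℝ} (hw : ContDiff ℝ (⊤ : ℕ∞) w) :
    d1 (d2 w) = d2 (d1 w) := by
  have hdw : Differentiable ℝ w := hw.differentiable (by simp)
  have hfd : ContDiff ℝ (⊤ : ℕ∞) (fderiv ℝ w) := hw.fderiv_right (by norm_cast)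
  have hfdd : Differentiable ℝ (fderiv ℝ w) := hfd.differentiable (by simp)
  funext x
  have h1 : d1 (d2 w) x = fderiv ℝ (fderiv ℝ w) x (1, 0) (0, 1) := by
    rw [d1_eq' (hw := (contDiff_d2 hw).differentiable (by simp))]
    rw [d2_eq' hdw]
    beta_reduce
    rw [fderiv_clm_apply (hfdd x) (differentiableAt_const _)]
    simp
  have h2 : d2 (d1 w) x = fderiv ℝ (fderiv ℝ w) x (0, 1) (1, 0) := by
    rw [d2_eq' (hw := (contDiff_d1 hw).differentiable (by simp))]
    rw [d1_eq' hdw]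
    beta_reduce
    rw [fderiv_clm_apply (hfdd x) (differentiableAt_const _)]
    simp
  rw [h1, h2]
  exact second_derivative_symmetric (fun y => (hdw y).hasFDerivAt)
    ((hfdd x).hasFDerivAt) _ _

lemma tendsto_zero_of_integrable {u : ℝ → ℝ} (hui : Integrable u) {L : ℝ}
    (h : Tendsto u atBot (𝓝 L)) : L = 0 := by
  by_contra hL
  have h2 : ∀ᶠ s in atBot, |L| / 2 ≤ |u s| := by
    have hball := h (Metric.ball_mem_nhds L (by positivity : (0:ℝ) < |L| / 2))
    filter_upwards [hball] with s hs
    have : |u s - L| < |L| / 2 := by simpa [Real.dist_eq] using hs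
    have := abs_sub_abs_le_abs_sub L (u s)
    rw [abs_sub_comm] at this
    linarith
  obtain ⟨s₀, hs₀⟩ := eventually_atBot.mp h2
  have hfin := hui.2
  rw [HasFiniteIntegral] at hfin
  have hcontra : (⊤ : ℝ≥0∞) ≤ ∫⁻ x, ‖u x‖₊ := by
    calc (⊤ : ℝ≥0∞) = ENNReal.ofReal (|L| / 2) * volume (Iic s₀) := by
          rw [Real.volume_Iic, ENNReal.mul_top]
          simp [ENNReal.ofReal_eq_zero]
          positivity
      _ = ∫⁻ _ in Iic s₀, ENNReal.ofReal (|L| / 2) := by rw [setLIntegral_const, mul_comm]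
      _ ≤ ∫⁻ x in Iic s₀, ‖u x‖₊ := by
          apply setLIntegral_mono' measurableSet_Iic
          intro x hx
          rw [← ofReal_norm_eq_coe_nnnorm]
          exact ENNReal.ofReal_le_ofReal (by simpa using hs₀ x hx)
      _ ≤ ∫⁻ x, ‖u x‖₊ := lintegral_mono' Measure.restrict_le_self le_rfl
  exact absurd (lt_of_lt_of_le hfin hcontra) (lt_irrefl _)

lemma one_dim {u u' : ℝ → ℝ} (hu : ∀ t, HasDerivAt u (u' t) t)
    (hui : Integrable u) (hu'i : Integrable u') (t : ℝ) :
    |u t| ≤ ∫ x, |u' x| := by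
  have h1 : ∀ s, u s = u t - ∫ x in s..t, u' x := by
    intro s
    rw [intervalIntegral.integral_eq_sub_of_hasDerivAt (fun x _ => hu x)
      hu'i.intervalIntegrable]
    ring
  have h2 : Tendsto (fun s => ∫ x in s..t, u' x) atBot (𝓝 (∫ x in Iic t, u' x)) :=
    intervalIntegral_tendsto_integral_Iic t hu'i.integrableOn tendsto_id
  have h3 : Tendsto u atBot (𝓝 (u t - ∫ x in Iic t, u' x)) := by
    have := h2.const_sub (u t)
    apply this.congr
    intro s; exact (h1 s).symm
  have h4 := tendsto_zero_of_integrable hui h3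
  have h5 : u t = ∫ x in Iic t, u' x := by linarith
  rw [h5]
  calc |∫ x in Iic t, u' x| ≤ ∫ x in Iic t, |u' x| := by
        simpa using norm_integral_le_integral_norm (μ := volume.restrict (Iic t)) u'
    _ ≤ ∫ x, |u' x| := by
        apply setIntegral_le_integral (hu'i.abs)
        filter_upwards with x using abs_nonneg _

lemma lintegral_CS {α : Type*} [MeasurableSpace α] {μ : Measure α} {g h : α → ℝ}
    (mg : AEMeasurable g μ) (mh : AEMeasurable h μ) :
    ∫⁻ x, (‖g x‖₊ : ℝ≥0∞) * ‖h x‖₊ ∂μ ≤ eLpNorm g 2 μ * eLpNorm h 2 μ := by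
  have hpq : Real.HolderConjugate 2 2 := Real.HolderConjugate.two_two
  have := ENNReal.lintegral_mul_le_Lp_mul_Lq μ hpq (mg.ennnorm) (mh.ennnorm)
  rw [eLpNorm_eq_lintegral_rpow_enorm_toReal (by norm_num) (by norm_num),
      eLpNorm_eq_lintegral_rpow_enorm_toReal (by norm_num) (by norm_num)]
  simpa [enorm_eq_nnnorm] using this

lemma integrable_mul2 {α : Type*} [MeasurableSpace α] {μ : Measure α} {g h : α → ℝ}
    (hg : MemLp g 2 μ) (hh : MemLp h 2 μ) : Integrable (fun x => g x * h x) μ :=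
  memLp_one_iff_integrable.mp (MemLp.smul (f := h) (φ := g) (p := 2) (q := 2) (r := 1) hh hg)

lemma line_bound1 {w : ℝ × ℝ → ℝ} (hw : ContDiff ℝ (⊤ : ℕ∞) w)
    (h0 : MemLp w 2 volume) (h1 : MemLp (d1 w) 2 volume) :
    ∀ᵐ b : ℝ, ∀ a : ℝ, ENNReal.ofReal ((w (a, b)) ^ 2) ≤
      2 * ∫⁻ s, (‖w (s, b)‖₊ : ℝ≥0∞) * ‖d1 w (s, b)‖₊ := by
  have hdiff : Differentiable ℝ w := hw.differentiable (by simp)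
  have hg : Integrable (fun x : ℝ × ℝ => w x * w x) := integrable_mul2 h0 h0
  have hg' : Integrable (fun x : ℝ × ℝ => w x * d1 w x) := integrable_mul2 h0 h1
  rw [Measure.volume_eq_prod] at hg hg'
  filter_upwards [hg.prod_left_ae, hg'.prod_left_ae] with b hb hb'
  intro a
  have hu : ∀ t, HasDerivAt (fun s => w (s, b) * w (s, b))
      ((fun s => 2 * (w (s, b) * d1 w (s, b))) t) t := by
    intro t
    have h := hasDerivAt_d1 hdiff t b
    have := h.mul h
    exact this.congr_deriv (by beta_reduce; ring)
  have hbound := one_dim hu hb (hb'.const_mul 2) a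
  calc ENNReal.ofReal ((w (a, b)) ^ 2)
      = ENNReal.ofReal |w (a, b) * w (a, b)| := by
        rw [abs_of_nonneg (mul_self_nonneg _), sq]
    _ ≤ ∫⁻ s, (‖2 * (w (s, b) * d1 w (s, b))‖₊ : ℝ≥0∞) := by
        rw [← ofReal_integral_norm_eq_lintegral_nnnorm (hb'.const_mul 2)]
        exact ENNReal.ofReal_le_ofReal (by simpa only [Real.norm_eq_abs] using hbound)
    _ = ∫⁻ s, 2 * ((‖w (s, b)‖₊ : ℝ≥0∞) * ‖d1 w (s, b)‖₊) := by
        congr 1; funext s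
        simp [nnnorm_mul, ENNReal.coe_mul, Real.nnnorm_two]
    _ = 2 * ∫⁻ s, (‖w (s, b)‖₊ : ℝ≥0∞) * ‖d1 w (s, b)‖₊ :=
        lintegral_const_mul' _ _ (by norm_num)

lemma line_bound2 {w : ℝ × ℝ → ℝ} (hw : ContDiff ℝ (⊤ : ℕ∞) w)
    (h0 : MemLp w 2 volume) (h1 : MemLp (d2 w) 2 volume) :
    ∀ᵐ a : ℝ, ∀ b : ℝ, ENNReal.ofReal ((w (a, b)) ^ 2) ≤
      2 * ∫⁻ t, (‖w (a, t)‖₊ : ℝ≥0∞) * ‖d2 w (a, t)‖₊ := by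
  have hdiff : Differentiable ℝ w := hw.differentiable (by simp)
  have hg : Integrable (fun x : ℝ × ℝ => w x * w x) := integrable_mul2 h0 h0
  have hg' : Integrable (fun x : ℝ × ℝ => w x * d2 w x) := integrable_mul2 h0 h1
  rw [Measure.volume_eq_prod] at hg hg'
  filter_upwards [hg.prod_right_ae, hg'.prod_right_ae] with a ha ha'
  intro b
  have hu : ∀ t, HasDerivAt (fun s => w (a, s) * w (a, s))
      ((fun s => 2 * (w (a, s) * d2 w (a, s))) t) t := by
    intro t
    have h := hasDerivAt_d2 hdiff a t
    have := h.mul h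
    exact this.congr_deriv (by beta_reduce; ring)
  have hbound := one_dim hu ha (ha'.const_mul 2) b
  calc ENNReal.ofReal ((w (a, b)) ^ 2)
      = ENNReal.ofReal |w (a, b) * w (a, b)| := by
        rw [abs_of_nonneg (mul_self_nonneg _), sq]
    _ ≤ ∫⁻ t, (‖2 * (w (a, t) * d2 w (a, t))‖₊ : ℝ≥0∞) := by
        rw [← ofReal_integral_norm_eq_lintegral_nnnorm (ha'.const_mul 2)]
        exact ENNReal.ofReal_le_ofReal (by simpa only [Real.norm_eq_abs] using hbound)
    _ = ∫⁻ t, 2 * ((‖w (a, t)‖₊ : ℝ≥0∞) * ‖d2 w (a, t)‖₊) := by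
        congr 1; funext t
        simp [nnnorm_mul, ENNReal.coe_mul, Real.nnnorm_two]
    _ = 2 * ∫⁻ t, (‖w (a, t)‖₊ : ℝ≥0∞) * ‖d2 w (a, t)‖₊ :=
        lintegral_const_mul' _ _ (by norm_num)


lemma ae_snd_of_ae {P : ℝ → Prop} (h : ∀ᵐ b : ℝ, P b) :
    ∀ᵐ x : ℝ × ℝ, P x.2 := by
  rw [Measure.volume_eq_prod]
  exact Measure.quasiMeasurePreserving_snd.ae h

lemma lady {u : ℝ × ℝ → ℝ} (hu : ContDiff ℝ (⊤ : ℕ∞) u)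
    (h0 : MemLp u 2 volume) (h1 : MemLp (d1 u) 2 volume) (h2 : MemLp (d2 u) 2 volume) :
    ∫⁻ x : ℝ × ℝ, (‖u x‖₊ : ℝ≥0∞) ^ (4 : ℕ) ≤
      4 * (eLpNorm u 2 volume * eLpNorm (d1 u) 2 volume)
        * (eLpNorm u 2 volume * eLpNorm (d2 u) 2 volume) := by
  have hcu : Continuous u := hu.continuous
  have hcd1 : Continuous (d1 u) := (contDiff_d1 hu).continuous
  have hcd2 : Continuous (d2 u) := (contDiff_d2 hu).continuous
  set A : ℝ → ℝ≥0∞ := fun b => ∫⁻ s, (‖u (s, b)‖₊ : ℝ≥0∞) * ‖d1 u (s, b)‖₊ with hA_def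
  set B : ℝ → ℝ≥0∞ := fun a => ∫⁻ t, (‖u (a, t)‖₊ : ℝ≥0∞) * ‖d2 u (a, t)‖₊ with hB_def
  have mF1 : Measurable (fun x : ℝ × ℝ => (‖u x‖₊ : ℝ≥0∞) * ‖d1 u x‖₊) :=
    (hcu.measurable.ennnorm).mul (hcd1.measurable.ennnorm)
  have mF2 : Measurable (fun x : ℝ × ℝ => (‖u x‖₊ : ℝ≥0∞) * ‖d2 u x‖₊) :=
    (hcu.measurable.ennnorm).mul (hcd2.measurable.ennnorm)
  have mA : Measurable A := Measurable.lintegral_prod_left mF1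
  have mB : Measurable B :=
    Measurable.lintegral_prod_right (f := fun a t => (‖u (a, t)‖₊ : ℝ≥0∞) * ‖d2 u (a, t)‖₊) mF2
  -- pointwise bound a.e.
  have hptA : ∀ᵐ x : ℝ × ℝ, ENNReal.ofReal ((u x) ^ 2) ≤ 2 * A x.2 := by
    have := line_bound1 hu h0 h1
    filter_upwards [ae_snd_of_ae this] with x hx
    simpa using hx x.1
  have hptB : ∀ᵐ x : ℝ × ℝ, ENNReal.ofReal ((u x) ^ 2) ≤ 2 * B x.1 := by
    have h := line_bound2 hu h0 h2
    have h' : ∀ᵐ x : ℝ × ℝ, ∀ b : ℝ,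
        ENNReal.ofReal ((u (x.1, b)) ^ 2) ≤ 2 * ∫⁻ t, (‖u (x.1, t)‖₊ : ℝ≥0∞) * ‖d2 u (x.1, t)‖₊ := by
      rw [Measure.volume_eq_prod]
      exact Measure.quasiMeasurePreserving_fst.ae h
    filter_upwards [h'] with x hx
    simpa using hx x.2
  have hsq : ∀ x : ℝ × ℝ, ((‖u x‖₊ : ℝ≥0∞)) ^ (2 : ℕ) = ENNReal.ofReal ((u x) ^ 2) := by
    intro x
    rw [← ofReal_norm_eq_coe_nnnorm, ← ENNReal.ofReal_pow (norm_nonneg _)]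
    congr 1
    rw [Real.norm_eq_abs, sq_abs]
  have step1 : ∫⁻ x : ℝ × ℝ, (‖u x‖₊ : ℝ≥0∞) ^ (4 : ℕ) ≤
      ∫⁻ x : ℝ × ℝ, (2 * B x.1) * (2 * A x.2) := by
    apply lintegral_mono_ae
    filter_upwards [hptA, hptB] with x h1x h2x
    have : (‖u x‖₊ : ℝ≥0∞) ^ (4 : ℕ) = ((‖u x‖₊ : ℝ≥0∞) ^ (2:ℕ)) * ((‖u x‖₊ : ℝ≥0∞) ^ (2:ℕ)) := by
      ring
    rw [this, hsq x]
    exact mul_le_mul' h2x h1x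
  have step2 : ∫⁻ x : ℝ × ℝ, (2 * B x.1) * (2 * A x.2) =
      (2 * ∫⁻ a, B a) * (2 * ∫⁻ b, A b) := by
    rw [Measure.volume_eq_prod]
    rw [lintegral_prod_mul ((mB.const_mul 2).aemeasurable) ((mA.const_mul 2).aemeasurable)]
    rw [lintegral_const_mul' _ _ (by norm_num), lintegral_const_mul' _ _ (by norm_num)]
  have hintA : ∫⁻ b, A b ≤ eLpNorm u 2 volume * eLpNorm (d1 u) 2 volume := by
    have : ∫⁻ b, A b = ∫⁻ x : ℝ × ℝ, (‖u x‖₊ : ℝ≥0∞) * ‖d1 u x‖₊ := by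
      rw [Measure.volume_eq_prod, lintegral_prod_symm _ mF1.aemeasurable]
    rw [this]
    exact lintegral_CS hcu.measurable.aemeasurable hcd1.measurable.aemeasurable
  have hintB : ∫⁻ a, B a ≤ eLpNorm u 2 volume * eLpNorm (d2 u) 2 volume := by
    have : ∫⁻ a, B a = ∫⁻ x : ℝ × ℝ, (‖u x‖₊ : ℝ≥0∞) * ‖d2 u x‖₊ := by
      rw [Measure.volume_eq_prod, lintegral_prod _ mF2.aemeasurable]
    rw [this]
    exact lintegral_CS hcu.measurable.aemeasurable hcd2.measurable.aemeasurable
  calc ∫⁻ x : ℝ × ℝ, (‖u x‖₊ : ℝ≥0∞) ^ (4 : ℕ)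
      ≤ (2 * ∫⁻ a, B a) * (2 * ∫⁻ b, A b) := step1.trans (le_of_eq step2)
    _ ≤ (2 * (eLpNorm u 2 volume * eLpNorm (d2 u) 2 volume))
        * (2 * (eLpNorm u 2 volume * eLpNorm (d1 u) 2 volume)) := by
        exact mul_le_mul' (mul_le_mul' le_rfl hintB) (mul_le_mul' le_rfl hintA)
    _ = 4 * (eLpNorm u 2 volume * eLpNorm (d1 u) 2 volume)
        * (eLpNorm u 2 volume * eLpNorm (d2 u) 2 volume) := by ring

lemma amgm_ennreal (a b : ℝ≥0∞) : 2 * (a * b) ≤ a ^ (2 : ℕ) + b ^ (2 : ℕ) := by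
  rcases eq_or_ne a ⊤ with rfl | ha
  · rcases eq_or_ne b 0 with rfl | hb
    · simp
    · have ht : (⊤ : ℝ≥0∞) ^ (2 : ℕ) = ⊤ := by simp
      rw [ht]; exact le_top.trans le_self_add
  · rcases eq_or_ne b ⊤ with rfl | hb
    · have ht : (⊤ : ℝ≥0∞) ^ (2 : ℕ) = ⊤ := by simp
      rw [ht]
      rcases eq_or_ne a 0 with rfl | ha0
      · simp
      · exact le_top.trans le_add_self
    · lift a to ℝ≥0 using ha
      lift b to ℝ≥0 using hb
      have h2 : (2 : ℝ) * (a * b) ≤ (a : ℝ) ^ 2 + (b : ℝ) ^ 2 := by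
        nlinarith [sq_nonneg ((a : ℝ) - b)]
      have hnn : (2 : ℝ≥0) * (a * b) ≤ a ^ 2 + b ^ 2 := by exact_mod_cast h2
      have := ENNReal.coe_le_coe.mpr hnn
      simpa [ENNReal.coe_mul] using this

lemma agmon {v : ℝ × ℝ → ℝ} (hv : ContDiff ℝ (⊤ : ℕ∞) v)
    (h00 : MemLp v 2 volume) (h10 : MemLp (d1 v) 2 volume)
    (h01 : MemLp (d2 v) 2 volume) (h11 : MemLp (d2 (d1 v)) 2 volume)
    (b00 : eLpNorm v 2 volume ≤ 1) (b10 : eLpNorm (d1 v) 2 volume ≤ 1)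
    (b01 : eLpNorm (d2 v) 2 volume ≤ 1) (b11 : eLpNorm (d2 (d1 v)) 2 volume ≤ 1) :
    ∀ x, |v x| ≤ 2 := by
  have hdv : Differentiable ℝ v := hv.differentiable (by simp)
  have hd1v : ContDiff ℝ (⊤ : ℕ∞) (d1 v) := contDiff_d1 hv
  have hdd1v : Differentiable ℝ (d1 v) := hd1v.differentiable (by simp)
  have hcv : Continuous v := hv.continuous
  have hcd1 : Continuous (d1 v) := hd1v.continuous
  have hcd2 : Continuous (d2 v) := (contDiff_d2 hv).continuous
  have hcd21 : Continuous (d2 (d1 v)) := (contDiff_d2 hd1v).continuous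
  -- K s bounds sup over t of G (s, t) where G = v^2 + (d1 v)^2
  set K : ℝ → ℝ≥0∞ := fun s => ∫⁻ t, (2 * ((‖v (s, t)‖₊ : ℝ≥0∞) * ‖d2 v (s, t)‖₊)
      + 2 * ((‖d1 v (s, t)‖₊ : ℝ≥0∞) * ‖d2 (d1 v) (s, t)‖₊)) with hK_def
  -- integrable products on the plane
  have I1 : Integrable (fun x : ℝ × ℝ => v x * v x) := integrable_mul2 h00 h00
  have I2 : Integrable (fun x : ℝ × ℝ => d1 v x * d1 v x) := integrable_mul2 h10 h10
  have I3 : Integrable (fun x : ℝ × ℝ => v x * d2 v x) := integrable_mul2 h00 h01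
  have I4 : Integrable (fun x : ℝ × ℝ => d1 v x * d2 (d1 v) x) := integrable_mul2 h10 h11
  rw [Measure.volume_eq_prod] at I1 I2 I3 I4
  -- Step 3 : for a.e. s, all t : ofReal (G (s,t)) ≤ K s
  have step3 : ∀ᵐ s : ℝ, ∀ t : ℝ,
      ENNReal.ofReal (v (s, t) * v (s, t) + d1 v (s, t) * d1 v (s, t)) ≤ K s := by
    filter_upwards [I1.prod_right_ae, I2.prod_right_ae, I3.prod_right_ae, I4.prod_right_ae]
      with s hs1 hs2 hs3 hs4
    intro t
    have hu : ∀ r, HasDerivAt (fun t => v (s, t) * v (s, t) + d1 v (s, t) * d1 v (s, t))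
        ((fun t => 2 * (v (s, t) * d2 v (s, t)) + 2 * (d1 v (s, t) * d2 (d1 v) (s, t))) r) r := by
      intro r
      have h1 := hasDerivAt_d2 hdv s r
      have h2 := hasDerivAt_d2 hdd1v s r
      have := (h1.mul h1).add (h2.mul h2)
      exact this.congr_deriv (by beta_reduce; ring)
    have hui : Integrable (fun t => v (s, t) * v (s, t) + d1 v (s, t) * d1 v (s, t)) :=
      hs1.add hs2
    have hu'i : Integrable
        (fun t => 2 * (v (s, t) * d2 v (s, t)) + 2 * (d1 v (s, t) * d2 (d1 v) (s, t))) :=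
      (hs3.const_mul 2).add (hs4.const_mul 2)
    have hb := one_dim hu hui hu'i t
    calc ENNReal.ofReal (v (s, t) * v (s, t) + d1 v (s, t) * d1 v (s, t))
        = ENNReal.ofReal |v (s, t) * v (s, t) + d1 v (s, t) * d1 v (s, t)| := by
          rw [abs_of_nonneg (add_nonneg (mul_self_nonneg _) (mul_self_nonneg _))]
      _ ≤ ∫⁻ r, (‖2 * (v (s, r) * d2 v (s, r)) + 2 * (d1 v (s, r) * d2 (d1 v) (s, r))‖₊ : ℝ≥0∞) := by
          rw [← ofReal_integral_norm_eq_lintegral_nnnorm hu'i]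
          exact ENNReal.ofReal_le_ofReal (by simpa only [Real.norm_eq_abs] using hb)
      _ ≤ K s := by
          apply lintegral_mono
          intro r
          calc ((‖2 * (v (s, r) * d2 v (s, r)) + 2 * (d1 v (s, r) * d2 (d1 v) (s, r))‖₊ : ℝ≥0∞))
              ≤ (‖2 * (v (s, r) * d2 v (s, r))‖₊ : ℝ≥0∞)
                + ‖2 * (d1 v (s, r) * d2 (d1 v) (s, r))‖₊ := by
                exact_mod_cast nnnorm_add_le _ _
            _ = 2 * ((‖v (s, r)‖₊ : ℝ≥0∞) * ‖d2 v (s, r)‖₊)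
                + 2 * ((‖d1 v (s, r)‖₊ : ℝ≥0∞) * ‖d2 (d1 v) (s, r)‖₊) := by
                simp [nnnorm_mul, ENNReal.coe_mul, Real.nnnorm_two]
  -- Step 4 : ∫⁻ K ≤ 4
  have step4 : ∫⁻ s, K s ≤ 4 := by
    have mK1 : Measurable (fun x : ℝ × ℝ => (‖v x‖₊ : ℝ≥0∞) * ‖d2 v x‖₊) :=
      hcv.measurable.ennnorm.mul hcd2.measurable.ennnorm
    have mK2 : Measurable (fun x : ℝ × ℝ => (‖d1 v x‖₊ : ℝ≥0∞) * ‖d2 (d1 v) x‖₊) :=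
      hcd1.measurable.ennnorm.mul hcd21.measurable.ennnorm
    have hKeq : ∫⁻ s, K s = ∫⁻ x : ℝ × ℝ, (2 * ((‖v x‖₊ : ℝ≥0∞) * ‖d2 v x‖₊)
        + 2 * ((‖d1 v x‖₊ : ℝ≥0∞) * ‖d2 (d1 v) x‖₊)) := by
      rw [Measure.volume_eq_prod, lintegral_prod]
      exact (((mK1.const_mul 2).add (mK2.const_mul 2))).aemeasurable
    rw [hKeq, lintegral_add_left ((mK1.const_mul 2)),
        lintegral_const_mul' _ _ (by norm_num), lintegral_const_mul' _ _ (by norm_num)]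
    have c1 : ∫⁻ x : ℝ × ℝ, (‖v x‖₊ : ℝ≥0∞) * ‖d2 v x‖₊ ≤ 1 := by
      refine le_trans (lintegral_CS hcv.measurable.aemeasurable hcd2.measurable.aemeasurable) ?_
      calc eLpNorm v 2 volume * eLpNorm (d2 v) 2 volume ≤ 1 * 1 := mul_le_mul' b00 b01
        _ = 1 := by ring
    have c2 : ∫⁻ x : ℝ × ℝ, (‖d1 v x‖₊ : ℝ≥0∞) * ‖d2 (d1 v) x‖₊ ≤ 1 := by
      refine le_trans (lintegral_CS hcd1.measurable.aemeasurable hcd21.measurable.aemeasurable) ?_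
      calc eLpNorm (d1 v) 2 volume * eLpNorm (d2 (d1 v)) 2 volume ≤ 1 * 1 := mul_le_mul' b10 b11
        _ = 1 := by ring
    calc 2 * (∫⁻ x : ℝ × ℝ, (‖v x‖₊ : ℝ≥0∞) * ‖d2 v x‖₊)
        + 2 * (∫⁻ x : ℝ × ℝ, (‖d1 v x‖₊ : ℝ≥0∞) * ‖d2 (d1 v) x‖₊)
        ≤ 2 * 1 + 2 * 1 := add_le_add (mul_le_mul' le_rfl c1) (mul_le_mul' le_rfl c2)
      _ = 4 := by norm_num
  -- Step 5 : a.e. pointwise bound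
  have step5 : ∀ᵐ b : ℝ, ∀ a : ℝ, ENNReal.ofReal ((v (a, b)) ^ 2) ≤ 4 := by
    filter_upwards [line_bound1 hv h00 h10] with b hb
    intro a
    refine (hb a).trans ?_
    calc 2 * ∫⁻ s, (‖v (s, b)‖₊ : ℝ≥0∞) * ‖d1 v (s, b)‖₊
        = ∫⁻ s, 2 * ((‖v (s, b)‖₊ : ℝ≥0∞) * ‖d1 v (s, b)‖₊) :=
          (lintegral_const_mul' _ _ (by norm_num)).symm
      _ ≤ ∫⁻ s, ((‖v (s, b)‖₊ : ℝ≥0∞) ^ (2:ℕ) + (‖d1 v (s, b)‖₊ : ℝ≥0∞) ^ (2:ℕ)) := by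
          exact lintegral_mono fun s => amgm_ennreal _ _
      _ = ∫⁻ s, ENNReal.ofReal (v (s, b) * v (s, b) + d1 v (s, b) * d1 v (s, b)) := by
          congr 1; funext s
          rw [ENNReal.ofReal_add (mul_self_nonneg _) (mul_self_nonneg _)]
          congr 1 <;>
          · rw [← ofReal_norm_eq_coe_nnnorm, ← ENNReal.ofReal_pow (norm_nonneg _)]
            congr 1
            rw [Real.norm_eq_abs, sq, abs_mul_abs_self]
      _ ≤ ∫⁻ s, K s := by
          apply lintegral_mono_ae
          filter_upwards [step3] with s hs using hs b
      _ ≤ 4 := step4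
  -- Step 6 : everywhere bound by continuity
  have hae : ∀ᵐ x : ℝ × ℝ, (v x) ^ 2 ≤ 4 := by
    filter_upwards [ae_snd_of_ae step5] with x hx
    have := hx x.1
    simp only [Prod.mk.eta] at this
    rw [show (4 : ℝ≥0∞) = ENNReal.ofReal (4 : ℝ) by norm_num] at this
    exact (ENNReal.ofReal_le_ofReal_iff (by norm_num)).mp this
  have hforall : ∀ x : ℝ × ℝ, (v x) ^ 2 ≤ 4 := by
    by_contra hcon
    push_neg at hcon
    obtain ⟨x₀, hx₀⟩ := hcon
    have hopen : IsOpen {x : ℝ × ℝ | 4 < (v x) ^ 2} :=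
      isOpen_lt continuous_const ((hcv.pow 2))
    have hnull : volume {x : ℝ × ℝ | 4 < (v x) ^ 2} = 0 := by
      rw [ae_iff] at hae
      convert hae using 2
      ext x; simp [not_le]
    have := hopen.eq_empty_of_measure_zero hnull
    rw [eq_empty_iff_forall_notMem] at this
    exact this x₀ hx₀
  intro x
  nlinarith [hforall x, sq_abs (v x), abs_nonneg (v x)]

/-- The squared `H^m(ℝ²)` norm: the sum of the squared `L²` norms of all
partial derivatives of order at most `m`. -/
def HSqe (m : ℕ) (f : ℝ × ℝ → ℝ) : ℝ≥0∞ :=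
  ∑ k ∈ Finset.range (m + 1), ∑ i ∈ Finset.range (k + 1),
    (L2e (d1^[i] (d2^[k - i] f))) ^ 2

/-- `L²` norm of the (first-order) total gradient. -/
def gradL2 (f : ℝ × ℝ → ℝ) : ℝ≥0∞ :=
  (L2e (d1 f) ^ 2 + L2e (d2 f) ^ 2) ^ ((1 : ℝ) / 2)

/-- `L²` norm of the second-order total derivative. -/
def grad2L2 (f : ℝ × ℝ → ℝ) : ℝ≥0∞ :=
  (L2e (d1 (d1 f)) ^ 2 + L2e (d1 (d2 f)) ^ 2
    + L2e (d2 (d1 f)) ^ 2 + L2e (d2 (d2 f)) ^ 2) ^ ((1 : ℝ) / 2)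

lemma HSqe_two (v : ℝ × ℝ → ℝ) : HSqe 2 v =
    L2e v ^ 2 + (L2e (d2 v) ^ 2 + L2e (d1 v) ^ 2)
      + (L2e (d2 (d2 v)) ^ 2 + L2e (d1 (d2 v)) ^ 2 + L2e (d1 (d1 v)) ^ 2) := by
  simp [HSqe, Finset.sum_range_succ]

lemma sq_lt_one_imp {x : ℝ≥0∞} (h : x ^ 2 < 1) : x ≤ 1 := by
  by_contra h'
  push_neg at h'
  exact absurd h (not_lt.mpr (le_trans (one_lt_pow' h' (two_ne_zero)).le le_rfl))

lemma rpow_half_sq (x : ℝ≥0∞) : (x ^ (2 : ℕ)) ^ ((1 : ℝ) / 2) = x := by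
  rw [← ENNReal.rpow_natCast x 2, ← ENNReal.rpow_mul]
  norm_num

lemma four_mul_sq_half (N : ℝ≥0∞) : (4 * N ^ (2 : ℕ)) ^ ((1 : ℝ) / 2) = 2 * N := by
  rw [ENNReal.mul_rpow_of_nonneg _ _ (by norm_num)]
  congr 1
  have h4 : (4 : ℝ≥0∞) = (2 : ℝ≥0∞) ^ (2 : ℕ) := by norm_num
  rw [h4, rpow_half_sq]
  exact rpow_half_sq N

lemma le_root_sum {x s : ℝ≥0∞} (h : x ^ (2 : ℕ) ≤ s) : x ≤ s ^ ((1 : ℝ) / 2) := by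
  have := ENNReal.rpow_le_rpow h (by norm_num : (0:ℝ) ≤ 1/2)
  rwa [rpow_half_sq] at this

lemma grad_pair {a b a' b' c : ℝ≥0∞} (ha : a ≤ c * a') (hb : b ≤ c * b') :
    (a ^ 2 + b ^ 2) ^ ((1 : ℝ) / 2) ≤ c * (a' ^ 2 + b' ^ 2) ^ ((1 : ℝ) / 2) := by
  have h1 : a ^ 2 + b ^ 2 ≤ c ^ (2:ℕ) * (a' ^ 2 + b' ^ 2) := by
    calc a ^ 2 + b ^ 2 ≤ (c * a') ^ 2 + (c * b') ^ 2 :=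
          add_le_add (pow_le_pow_left' ha 2) (pow_le_pow_left' hb 2)
      _ = c ^ (2:ℕ) * (a' ^ 2 + b' ^ 2) := by ring
  calc (a ^ 2 + b ^ 2) ^ ((1 : ℝ) / 2)
      ≤ (c ^ (2:ℕ) * (a' ^ 2 + b' ^ 2)) ^ ((1 : ℝ) / 2) :=
        ENNReal.rpow_le_rpow h1 (by norm_num)
    _ = c * (a' ^ 2 + b' ^ 2) ^ ((1 : ℝ) / 2) := by
        rw [ENNReal.mul_rpow_of_nonneg _ _ (by norm_num), rpow_half_sq]

lemma grad_quad {a b c d K : ℝ≥0∞} (ha : a ≤ K) (hb : b ≤ K) (hc : c ≤ K) (hd : d ≤ K) :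
    (a ^ 2 + b ^ 2 + c ^ 2 + d ^ 2) ^ ((1 : ℝ) / 2) ≤ 2 * K := by
  have h1 : a ^ 2 + b ^ 2 + c ^ 2 + d ^ 2 ≤ 4 * K ^ (2:ℕ) := by
    calc a ^ 2 + b ^ 2 + c ^ 2 + d ^ 2 ≤ K ^ 2 + K ^ 2 + K ^ 2 + K ^ 2 := by
          gcongr
      _ = 4 * K ^ (2:ℕ) := by ring
  calc (a ^ 2 + b ^ 2 + c ^ 2 + d ^ 2) ^ ((1 : ℝ) / 2)
      ≤ (4 * K ^ (2:ℕ)) ^ ((1 : ℝ) / 2) := ENNReal.rpow_le_rpow h1 (by norm_num)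
    _ = 2 * K := four_mul_sq_half K

lemma eLpNorm_bdd_mul {g h : ℝ × ℝ → ℝ} {M : ℝ} (hM : 0 ≤ M) (hb : ∀ x, |g x| ≤ M) :
    eLpNorm (fun x => g x * h x) 2 volume ≤ ENNReal.ofReal M * eLpNorm h 2 volume := by
  calc eLpNorm (fun x => g x * h x) 2 volume
      ≤ eLpNorm (fun x => M * h x) 2 volume := by
        apply eLpNorm_mono
        intro x
        rw [Real.norm_eq_abs, Real.norm_eq_abs, abs_mul, abs_mul, abs_of_nonneg hM]
        exact mul_le_mul_of_nonneg_right (hb x) (abs_nonneg _)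
    _ = (‖M‖₊ : ℝ≥0∞) * eLpNorm h 2 volume := by
        simpa [enorm_eq_nnnorm, Pi.smul_def] using eLpNorm_const_smul (M : ℝ) h 2 (volume : Measure (ℝ × ℝ))
    _ = ENNReal.ofReal M * eLpNorm h 2 volume := by
        rw [← ofReal_norm_eq_coe_nnnorm, Real.norm_of_nonneg hM]

lemma pair_bound {g h : ℝ × ℝ → ℝ} (mg : Measurable g) (mh : Measurable h) {N : ℝ≥0∞}
    (hXg : ∫⁻ x : ℝ × ℝ, (‖g x‖₊ : ℝ≥0∞) ^ (4 : ℕ) ≤ 4 * N ^ (2 : ℕ))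
    (hXh : ∫⁻ x : ℝ × ℝ, (‖h x‖₊ : ℝ≥0∞) ^ (4 : ℕ) ≤ 4 * N ^ (2 : ℕ)) :
    eLpNorm (fun x => g x * h x) 2 volume ≤ 2 * N := by
  have hpq : Real.HolderConjugate 2 2 := Real.HolderConjugate.two_two
  have CS := ENNReal.lintegral_mul_le_Lp_mul_Lq (volume : Measure (ℝ × ℝ)) hpq
    ((mg.ennnorm.pow_const (2:ℕ)).aemeasurable) ((mh.ennnorm.pow_const (2:ℕ)).aemeasurable)
  have conv : ∀ (u : ℝ × ℝ → ℝ), (fun x => ((‖u x‖₊ : ℝ≥0∞) ^ (2:ℕ)) ^ (2:ℝ)) =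
      fun x => (‖u x‖₊ : ℝ≥0∞) ^ (4:ℕ) := by
    intro u; funext x
    rw [← ENNReal.rpow_natCast ((‖u x‖₊ : ℝ≥0∞)) 2, ← ENNReal.rpow_mul,
      ← ENNReal.rpow_natCast ((‖u x‖₊ : ℝ≥0∞)) 4]
    norm_num
  have key : ∫⁻ x : ℝ × ℝ, ((‖g x * h x‖₊ : ℝ≥0∞)) ^ (2:ℕ) ≤ 4 * N ^ (2:ℕ) := by
    calc ∫⁻ x : ℝ × ℝ, ((‖g x * h x‖₊ : ℝ≥0∞)) ^ (2:ℕ)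
        = ∫⁻ x : ℝ × ℝ, ((‖g x‖₊ : ℝ≥0∞) ^ (2:ℕ)) * ((‖h x‖₊ : ℝ≥0∞) ^ (2:ℕ)) := by
          congr 1; funext x
          rw [nnnorm_mul]; push_cast; ring
      _ ≤ (∫⁻ x : ℝ × ℝ, ((‖g x‖₊ : ℝ≥0∞) ^ (2:ℕ)) ^ (2:ℝ)) ^ ((1:ℝ)/2)
          * (∫⁻ x : ℝ × ℝ, ((‖h x‖₊ : ℝ≥0∞) ^ (2:ℕ)) ^ (2:ℝ)) ^ ((1:ℝ)/2) := by
          simpa using CS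
      _ = (∫⁻ x : ℝ × ℝ, (‖g x‖₊ : ℝ≥0∞) ^ (4:ℕ)) ^ ((1:ℝ)/2)
          * (∫⁻ x : ℝ × ℝ, (‖h x‖₊ : ℝ≥0∞) ^ (4:ℕ)) ^ ((1:ℝ)/2) := by
          rw [conv g, conv h]
      _ ≤ (4 * N ^ (2:ℕ)) ^ ((1:ℝ)/2) * (4 * N ^ (2:ℕ)) ^ ((1:ℝ)/2) := by
          exact mul_le_mul' (ENNReal.rpow_le_rpow hXg (by norm_num))
            (ENNReal.rpow_le_rpow hXh (by norm_num))
      _ = (2 * N) * (2 * N) := by rw [four_mul_sq_half]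
      _ = 4 * N ^ (2:ℕ) := by ring
  rw [eLpNorm_eq_lintegral_rpow_enorm_toReal (by norm_num) (by norm_num)]
  have h2 : (2 : ℝ≥0∞).toReal = (2 : ℝ) := by simp
  rw [h2]
  have conv2 : (fun x : ℝ × ℝ => (‖g x * h x‖₊ : ℝ≥0∞) ^ (2:ℝ)) =
      fun x : ℝ × ℝ => (‖g x * h x‖₊ : ℝ≥0∞) ^ (2:ℕ) := by
    funext x; rw [← ENNReal.rpow_natCast _ 2]; norm_num
  calc (∫⁻ x : ℝ × ℝ, (‖g x * h x‖₊ : ℝ≥0∞) ^ (2:ℝ)) ^ ((1:ℝ)/2)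
      = (∫⁻ x : ℝ × ℝ, (‖g x * h x‖₊ : ℝ≥0∞) ^ (2:ℕ)) ^ ((1:ℝ)/2) := by rw [conv2]
    _ ≤ (4 * N ^ (2:ℕ)) ^ ((1:ℝ)/2) := ENNReal.rpow_le_rpow key (by norm_num)
    _ = 2 * N := four_mul_sq_half N

/-- **Proposition 2.2, gradient composition estimates (cases `k = 1, 2`).**
If `f` is smooth then `‖∇(f∘v)‖_{L²} ≤ C ‖∇v‖_{L²}` and
`‖∇²(f∘v)‖_{L²} ≤ C ‖∇²v‖_{L²}` for every smooth `v` with `‖v‖_{H²} < 1`. -/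
theorem composition_gradient_estimate
    (f : ℝ → ℝ) (hf : ContDiff ℝ (⊤ : ℕ∞) f) :
    ∃ C : ℝ, 0 < C ∧
      ∀ v : ℝ × ℝ → ℝ,
        ContDiff ℝ (⊤ : ℕ∞) v →
        HSqe 2 v < 1 →
        gradL2 (fun x => f (v x)) ≤ ENNReal.ofReal C * gradL2 v ∧
        grad2L2 (fun x => f (v x)) ≤ ENNReal.ofReal C * grad2L2 v := by
  have hf1 : Differentiable ℝ f := hf.differentiable (by simp)
  have hcf' : ContDiff ℝ (⊤ : ℕ∞) (deriv f) := (contDiff_infty_iff_deriv.mp hf).2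
  have hf'1 : Differentiable ℝ (deriv f) := hcf'.differentiable (by simp)
  have hcf'' : ContDiff ℝ (⊤ : ℕ∞) (deriv (deriv f)) := (contDiff_infty_iff_deriv.mp hcf').2
  obtain ⟨M₁', hM₁'⟩ := (isCompact_Icc : IsCompact (Icc (-2:ℝ) 2)).exists_bound_of_continuousOn
    (hcf'.continuous.continuousOn)
  obtain ⟨M₂', hM₂'⟩ := (isCompact_Icc : IsCompact (Icc (-2:ℝ) 2)).exists_bound_of_continuousOn
    (hcf''.continuous.continuousOn)
  set M₁ : ℝ := max M₁' 0 with hM₁def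
  set M₂ : ℝ := max M₂' 0 with hM₂def
  have hM₁0 : 0 ≤ M₁ := le_max_right _ _
  have hM₂0 : 0 ≤ M₂ := le_max_right _ _
  refine ⟨2 * (2 * M₂ + M₁) + M₁ + 1, by positivity, ?_⟩
  intro v hv hH
  have hv1 : Differentiable ℝ v := hv.differentiable (by simp)
  have hcv : Continuous v := hv.continuous
  have hd1v : ContDiff ℝ (⊤ : ℕ∞) (d1 v) := contDiff_d1 hv
  have hd2v : ContDiff ℝ (⊤ : ℕ∞) (d2 v) := contDiff_d2 hv
  have hd1v1 : Differentiable ℝ (d1 v) := hd1v.differentiable (by simp)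
  have hd2v1 : Differentiable ℝ (d2 v) := hd2v.differentiable (by simp)
  have hcd1 : Continuous (d1 v) := hd1v.continuous
  have hcd2 : Continuous (d2 v) := hd2v.continuous
  have hc11 : Continuous (d1 (d1 v)) := (contDiff_d1 hd1v).continuous
  have hc21 : Continuous (d2 (d1 v)) := (contDiff_d2 hd1v).continuous
  have hc12 : Continuous (d1 (d2 v)) := (contDiff_d1 hd2v).continuous
  have hc22 : Continuous (d2 (d2 v)) := (contDiff_d2 hd2v).continuous
  rw [HSqe_two] at hH
  -- componentwise bounds from HSqe
  have b00 : eLpNorm v 2 volume ≤ 1 := sq_lt_one_imp (lt_of_le_of_lt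
    (le_trans (self_le_add_right _ _) (self_le_add_right _ _)) hH)
  have b01 : eLpNorm (d2 v) 2 volume ≤ 1 := sq_lt_one_imp (lt_of_le_of_lt
    (le_trans (le_trans (self_le_add_right _ _) (self_le_add_left _ _))
      (self_le_add_right _ _)) hH)
  have b10 : eLpNorm (d1 v) 2 volume ≤ 1 := sq_lt_one_imp (lt_of_le_of_lt
    (le_trans (le_trans (self_le_add_left _ _) (self_le_add_left _ _))
      (self_le_add_right _ _)) hH)
  have b02 : eLpNorm (d2 (d2 v)) 2 volume ≤ 1 := sq_lt_one_imp (lt_of_le_of_lt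
    (le_trans (le_trans (self_le_add_right _ _) (self_le_add_right _ _))
      (self_le_add_left _ _)) hH)
  have b12 : eLpNorm (d1 (d2 v)) 2 volume ≤ 1 := sq_lt_one_imp (lt_of_le_of_lt
    (le_trans (le_trans (self_le_add_left _ _) (self_le_add_right _ _))
      (self_le_add_left _ _)) hH)
  have b20 : eLpNorm (d1 (d1 v)) 2 volume ≤ 1 := sq_lt_one_imp (lt_of_le_of_lt
    (le_trans (self_le_add_left _ _) (self_le_add_left _ _)) hH)
  have hsch : d1 (d2 v) = d2 (d1 v) := schwarz hv
  have b21 : eLpNorm (d2 (d1 v)) 2 volume ≤ 1 := by rwa [hsch] at b12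
  -- MemLp facts
  have m00 : MemLp v 2 volume := ⟨hcv.aestronglyMeasurable, lt_of_le_of_lt b00 ENNReal.one_lt_top⟩
  have m10 : MemLp (d1 v) 2 volume :=
    ⟨hcd1.aestronglyMeasurable, lt_of_le_of_lt b10 ENNReal.one_lt_top⟩
  have m01 : MemLp (d2 v) 2 volume :=
    ⟨hcd2.aestronglyMeasurable, lt_of_le_of_lt b01 ENNReal.one_lt_top⟩
  have m20 : MemLp (d1 (d1 v)) 2 volume :=
    ⟨hc11.aestronglyMeasurable, lt_of_le_of_lt b20 ENNReal.one_lt_top⟩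
  have m21 : MemLp (d2 (d1 v)) 2 volume :=
    ⟨hc21.aestronglyMeasurable, lt_of_le_of_lt b21 ENNReal.one_lt_top⟩
  have m12 : MemLp (d1 (d2 v)) 2 volume :=
    ⟨hc12.aestronglyMeasurable, lt_of_le_of_lt b12 ENNReal.one_lt_top⟩
  have m02 : MemLp (d2 (d2 v)) 2 volume :=
    ⟨hc22.aestronglyMeasurable, lt_of_le_of_lt b02 ENNReal.one_lt_top⟩
  -- uniform bound |v| ≤ 2
  have hvinf : ∀ x, |v x| ≤ 2 := agmon hv m00 m10 m01 m21 b00 b10 b01 b21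
  have hmem : ∀ x, v x ∈ Icc (-2:ℝ) 2 := by
    intro x
    have := abs_le.mp (hvinf x)
    exact ⟨this.1, this.2⟩
  have hb1 : ∀ x, |deriv f (v x)| ≤ M₁ := fun x =>
    le_trans (by simpa [Real.norm_eq_abs] using hM₁' (v x) (hmem x)) (le_max_left _ _)
  have hb2 : ∀ x, |deriv (deriv f) (v x)| ≤ M₂ := fun x =>
    le_trans (by simpa [Real.norm_eq_abs] using hM₂' (v x) (hmem x)) (le_max_left _ _)
  -- first order estimate
  have e1 : d1 (fun x => f (v x)) = fun x => deriv f (v x) * d1 v x := d1_comp hf1 hv1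
  have e2 : d2 (fun x => f (v x)) = fun x => deriv f (v x) * d2 v x := d2_comp hf1 hv1
  have g1 : L2e (d1 (fun x => f (v x))) ≤ ENNReal.ofReal M₁ * L2e (d1 v) := by
    rw [e1]; exact eLpNorm_bdd_mul hM₁0 hb1
  have g2 : L2e (d2 (fun x => f (v x))) ≤ ENNReal.ofReal M₁ * L2e (d2 v) := by
    rw [e2]; exact eLpNorm_bdd_mul hM₁0 hb1
  have first : gradL2 (fun x => f (v x)) ≤ ENNReal.ofReal M₁ * gradL2 v := by
    simp only [gradL2]
    exact grad_pair g1 g2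
  constructor
  · refine first.trans (mul_le_mul_left (ENNReal.ofReal_le_ofReal ?_) _)
    nlinarith
  -- second order estimate
  set N : ℝ≥0∞ := grad2L2 v with hNdef
  have n20 : eLpNorm (d1 (d1 v)) 2 volume ≤ N := le_root_sum
    (le_trans (le_trans (self_le_add_right _ _) (self_le_add_right _ _)) (self_le_add_right _ _))
  have n12 : eLpNorm (d1 (d2 v)) 2 volume ≤ N := le_root_sum
    (le_trans (le_trans (self_le_add_left _ _) (self_le_add_right _ _)) (self_le_add_right _ _))
  have n21 : eLpNorm (d2 (d1 v)) 2 volume ≤ N := le_root_sum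
    (le_trans (self_le_add_left _ _) (self_le_add_right _ _))
  have n02 : eLpNorm (d2 (d2 v)) 2 volume ≤ N := le_root_sum (self_le_add_left _ _)
  -- Ladyzhenskaya bounds
  have lady1 : ∫⁻ x : ℝ × ℝ, (‖d1 v x‖₊ : ℝ≥0∞) ^ (4:ℕ) ≤ 4 * N ^ (2:ℕ) := by
    refine (lady hd1v m10 m20 m21).trans ?_
    calc 4 * (eLpNorm (d1 v) 2 volume * eLpNorm (d1 (d1 v)) 2 volume)
        * (eLpNorm (d1 v) 2 volume * eLpNorm (d2 (d1 v)) 2 volume)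
        ≤ 4 * (1 * N) * (1 * N) := by
          exact mul_le_mul' (mul_le_mul' le_rfl (mul_le_mul' b10 n20)) (mul_le_mul' b10 n21)
      _ = 4 * N ^ (2:ℕ) := by ring
  have lady2 : ∫⁻ x : ℝ × ℝ, (‖d2 v x‖₊ : ℝ≥0∞) ^ (4:ℕ) ≤ 4 * N ^ (2:ℕ) := by
    refine (lady hd2v m01 m12 m02).trans ?_
    calc 4 * (eLpNorm (d2 v) 2 volume * eLpNorm (d1 (d2 v)) 2 volume)
        * (eLpNorm (d2 v) 2 volume * eLpNorm (d2 (d2 v)) 2 volume)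
        ≤ 4 * (1 * N) * (1 * N) := by
          exact mul_le_mul' (mul_le_mul' le_rfl (mul_le_mul' b01 n12)) (mul_le_mul' b01 n02)
      _ = 4 * N ^ (2:ℕ) := by ring
  have p11 : eLpNorm (fun x => d1 v x * d1 v x) 2 volume ≤ 2 * N :=
    pair_bound hcd1.measurable hcd1.measurable lady1 lady1
  have p12 : eLpNorm (fun x => d1 v x * d2 v x) 2 volume ≤ 2 * N :=
    pair_bound hcd1.measurable hcd2.measurable lady1 lady2
  have p21 : eLpNorm (fun x => d2 v x * d1 v x) 2 volume ≤ 2 * N :=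
    pair_bound hcd2.measurable hcd1.measurable lady2 lady1
  have p22 : eLpNorm (fun x => d2 v x * d2 v x) 2 volume ≤ 2 * N :=
    pair_bound hcd2.measurable hcd2.measurable lady2 lady2
  -- second derivative formulas
  have hgd : Differentiable ℝ (fun x : ℝ × ℝ => deriv f (v x)) := hf'1.comp hv1
  have E11 : d1 (d1 (fun x => f (v x))) =
      fun x => deriv (deriv f) (v x) * d1 v x * d1 v x + deriv f (v x) * d1 (d1 v) x := by
    calc d1 (d1 (fun x => f (v x))) = d1 (fun x => deriv f (v x) * d1 v x) := by rw [e1]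
      _ = fun x => d1 (fun y => deriv f (v y)) x * d1 v x + deriv f (v x) * d1 (d1 v) x :=
          d1_mul hgd hd1v1
      _ = _ := by simp only [d1_comp hf'1 hv1]
  have E21 : d2 (d1 (fun x => f (v x))) =
      fun x => deriv (deriv f) (v x) * d2 v x * d1 v x + deriv f (v x) * d2 (d1 v) x := by
    calc d2 (d1 (fun x => f (v x))) = d2 (fun x => deriv f (v x) * d1 v x) := by rw [e1]
      _ = fun x => d2 (fun y => deriv f (v y)) x * d1 v x + deriv f (v x) * d2 (d1 v) x :=
          d2_mul hgd hd1v1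
      _ = _ := by simp only [d2_comp hf'1 hv1]
  have E12 : d1 (d2 (fun x => f (v x))) =
      fun x => deriv (deriv f) (v x) * d1 v x * d2 v x + deriv f (v x) * d1 (d2 v) x := by
    calc d1 (d2 (fun x => f (v x))) = d1 (fun x => deriv f (v x) * d2 v x) := by rw [e2]
      _ = fun x => d1 (fun y => deriv f (v y)) x * d2 v x + deriv f (v x) * d1 (d2 v) x :=
          d1_mul hgd hd2v1
      _ = _ := by simp only [d1_comp hf'1 hv1]
  have E22 : d2 (d2 (fun x => f (v x))) =
      fun x => deriv (deriv f) (v x) * d2 v x * d2 v x + deriv f (v x) * d2 (d2 v) x := by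
    calc d2 (d2 (fun x => f (v x))) = d2 (fun x => deriv f (v x) * d2 v x) := by rw [e2]
      _ = fun x => d2 (fun y => deriv f (v y)) x * d2 v x + deriv f (v x) * d2 (d2 v) x :=
          d2_mul hgd hd2v1
      _ = _ := by simp only [d2_comp hf'1 hv1]
  set c2 : ℝ≥0∞ := ENNReal.ofReal (2 * M₂ + M₁) with hc2def
  have hc2split : c2 = ENNReal.ofReal M₂ * 2 + ENNReal.ofReal M₁ := by
    rw [hc2def, ENNReal.ofReal_add (by positivity) hM₁0, ENNReal.ofReal_mul (by norm_num)]
    congr 1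
    rw [mul_comm]
    congr 1
    simp
  have hcf''v : Continuous (fun x : ℝ × ℝ => deriv (deriv f) (v x)) :=
    hcf''.continuous.comp hcv
  have hcf'v : Continuous (fun x : ℝ × ℝ => deriv f (v x)) := hcf'.continuous.comp hcv
  -- generic single-term bound
  have term_bound : ∀ (gi gj dij : ℝ × ℝ → ℝ), Continuous gi → Continuous gj → Continuous dij →
      eLpNorm (fun x => gi x * gj x) 2 volume ≤ 2 * N →
      eLpNorm dij 2 volume ≤ N →
      eLpNorm (fun x => deriv (deriv f) (v x) * gi x * gj x + deriv f (v x) * dij x) 2 volume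
        ≤ c2 * N := by
    intro gi gj dij hgi hgj hdij hpair hdle
    have hT1 : Continuous (fun x : ℝ × ℝ => deriv (deriv f) (v x) * gi x * gj x) :=
      (hcf''v.mul hgi).mul hgj
    have hT2 : Continuous (fun x : ℝ × ℝ => deriv f (v x) * dij x) := hcf'v.mul hdij
    calc eLpNorm (fun x => deriv (deriv f) (v x) * gi x * gj x + deriv f (v x) * dij x) 2 volume
        ≤ eLpNorm (fun x => deriv (deriv f) (v x) * gi x * gj x) 2 volume
          + eLpNorm (fun x => deriv f (v x) * dij x) 2 volume :=
          eLpNorm_add_le hT1.aestronglyMeasurable hT2.aestronglyMeasurable one_le_two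
      _ ≤ ENNReal.ofReal M₂ * (2 * N) + ENNReal.ofReal M₁ * N := by
          apply add_le_add
          · have hre : (fun x : ℝ × ℝ => deriv (deriv f) (v x) * gi x * gj x) =
                fun x => deriv (deriv f) (v x) * (gi x * gj x) := by
              funext x; ring
            rw [hre]
            exact (eLpNorm_bdd_mul hM₂0 hb2).trans (mul_le_mul' le_rfl hpair)
          · exact (eLpNorm_bdd_mul hM₁0 hb1).trans (mul_le_mul' le_rfl hdle)
      _ = c2 * N := by rw [hc2split]; ring
  have B11 : L2e (d1 (d1 (fun x => f (v x)))) ≤ c2 * N := by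
    rw [L2e, E11]; exact term_bound _ _ _ hcd1 hcd1 hc11 p11 n20
  have B12 : L2e (d1 (d2 (fun x => f (v x)))) ≤ c2 * N := by
    rw [L2e, E12]; exact term_bound _ _ _ hcd1 hcd2 hc12 p12 n12
  have B21 : L2e (d2 (d1 (fun x => f (v x)))) ≤ c2 * N := by
    rw [L2e, E21]; exact term_bound _ _ _ hcd2 hcd1 hc21 p21 n21
  have B22 : L2e (d2 (d2 (fun x => f (v x)))) ≤ c2 * N := by
    rw [L2e, E22]; exact term_bound _ _ _ hcd2 hcd2 hc22 p22 n02
  have second : grad2L2 (fun x => f (v x)) ≤ 2 * (c2 * N) := by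
    simp only [grad2L2]
    exact grad_quad B11 B12 B21 B22
  refine second.trans ?_
  have : 2 * (c2 * N) = (2 * c2) * N := by ring
  rw [this]
  refine mul_le_mul_left ?_ _
  calc 2 * c2 = ENNReal.ofReal (2 * (2 * M₂ + M₁)) := by
        rw [hc2def, ENNReal.ofReal_mul (by norm_num)]
        congr 1
        simp
    _ ≤ ENNReal.ofReal (2 * (2 * M₂ + M₁) + M₁ + 1) :=
        ENNReal.ofReal_le_ofReal (by nlinarith)


end
end
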